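/- arXiv:math/0201282 — 11 statements merged into one kernel-verified Lean document; each statement's English description precedes it below -/
import Mathlib

section
/- Let G be a topological group, and let H ⊆ K be two subgroups of G. Let A be a topological space with a continuous H-action and B a topological space with a continuous K-action, and let f : A → B be an H-equivariant map which is H-open. Then the induced map F : G ×_H A → G ×_K B, [g,a]_H ↦ [g, f(a)]_K, between the twisted products equipped with their quotient topologies, is G-open: the image under F of every G-invariant open subset of G ×_H A is open in G ×_K B. -/
/-!
A `G`-invariant set `W ⊆ G ×_H A` is determined by its slice `U = {a | [1, a] ∈ W}`:
`[g, a] ∈ W ↔ a ∈ U`. If `W` is open then `U` is open and `H`-invariant, so `f '' U` is open.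
The preimage of `F '' W` in `G × B` is `G × K • f '' U`, which is open because `K` acts on
`B` by homeomorphisms; hence `F '' W` is open in the quotient topology.
-/

open Pointwise

/-- The relation defining the twisted product `G ×_H A`:
`(g, a) ∼ (g h⁻¹, h • a)` for `h ∈ H`.  The twisted product `Quot (twistRel H A)`
carries the quotient topology coming from the product topology on `G × A`. -/
def twistRel {G : Type*} [Group G] (H : Subgroup G) (A : Type*) [MulAction H A] :
    G × A → G × A → Prop :=
  fun p q => ∃ h : H, q.1 = p.1 * (h : G)⁻¹ ∧ q.2 = h • p.2

namespace TwistedProduct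

variable {G : Type*} [Group G] (H : Subgroup G) (A : Type*) [MulAction H A]

theorem twistRel_equivalence : Equivalence (twistRel H A) where
  refl _ := ⟨1, by simp, by simp⟩
  symm := by
    rintro p q ⟨h, hq₁, hq₂⟩
    exact ⟨h⁻¹, by simp [hq₁, mul_assoc], by simp [hq₂]⟩
  trans := by
    rintro p q r ⟨h₁, hq₁, hq₂⟩ ⟨h₂, hr₁, hr₂⟩
    exact ⟨h₂ * h₁, by simp [hr₁, hq₁, mul_assoc], by simp [hr₂, hq₂, mul_smul]⟩

variable {H A}

theorem twistRel_of_mk_eq_mk {x y : G × A}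
    (hxy : Quot.mk (twistRel H A) x = Quot.mk (twistRel H A) y) : twistRel H A x y :=
  (twistRel_equivalence H A).eqvGen_iff.mp (Quot.eq.mp hxy)

variable (H A)

def leftMul (g' : G) : Quot (twistRel H A) → Quot (twistRel H A) :=
  Quot.lift (fun p => Quot.mk _ (g' * p.1, p.2)) <| by
    rintro p q ⟨h, hq₁, hq₂⟩
    exact Quot.sound ⟨h, by rw [hq₁, mul_assoc], hq₂⟩

def slice (W : Set (Quot (twistRel H A))) : Set A :=
  {a | Quot.mk _ ((1 : G), a) ∈ W}

variable {H A}

theorem mk_mem_iff_mem_slice {W : Set (Quot (twistRel H A))}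
    (hW : ∀ (g : G) (x : Quot (twistRel H A)), x ∈ W → leftMul H A g x ∈ W) (g : G) (a : A) :
    Quot.mk _ (g, a) ∈ W ↔ a ∈ slice H A W := by
  constructor
  · intro ha
    simpa [leftMul, slice] using hW g⁻¹ _ ha
  · intro ha
    simpa [leftMul] using hW g _ ha

theorem smul_mem_slice {W : Set (Quot (twistRel H A))}
    (hW : ∀ (g : G) (x : Quot (twistRel H A)), x ∈ W → leftMul H A g x ∈ W)
    (h : H) {a : A} (ha : a ∈ slice H A W) : h • a ∈ slice H A W := by
  have hmk : Quot.mk (twistRel H A) ((1 : G), a) = Quot.mk _ ((h : G)⁻¹, h • a) :=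
    Quot.sound ⟨h, by simp, rfl⟩
  change Quot.mk _ _ ∈ W at ha
  rw [hmk] at ha
  exact (mk_mem_iff_mem_slice hW _ _).mp ha

theorem isOpen_slice [TopologicalSpace G] [TopologicalSpace A] {W : Set (Quot (twistRel H A))}
    (hW : IsOpen W) : IsOpen (slice H A W) :=
  (hW.preimage continuous_quot_mk).preimage (Continuous.prodMk_right 1)

variable {K : Subgroup G} {B : Type*} [MulAction K B]

def map (hHK : H ≤ K) (f : A → B)
    (hf : ∀ (h : H) (a : A), f (h • a) = (⟨(h : G), hHK h.2⟩ : K) • f a) :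
    Quot (twistRel H A) → Quot (twistRel K B) :=
  Quot.lift (fun p => Quot.mk _ (p.1, f p.2)) <| by
    rintro p q ⟨h, hq₁, hq₂⟩
    exact Quot.sound ⟨⟨(h : G), hHK h.2⟩, hq₁, by rw [hq₂, hf]⟩

theorem mk_preimage_map_image (hHK : H ≤ K) (f : A → B)
    (hf : ∀ (h : H) (a : A), f (h • a) = (⟨(h : G), hHK h.2⟩ : K) • f a)
    {W : Set (Quot (twistRel H A))}
    (hW : ∀ (g : G) (x : Quot (twistRel H A)), x ∈ W → leftMul H A g x ∈ W) :
    Quot.mk (twistRel K B) ⁻¹' (map hHK f hf '' W) =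
      Prod.snd ⁻¹' ⋃ k : K, k • f '' slice H A W := by
  ext ⟨g, b⟩
  simp only [Set.mem_preimage, Set.mem_image, Set.mem_iUnion]
  constructor
  · rintro ⟨x, hx, hxb⟩
    obtain ⟨⟨g₀, a⟩, rfl⟩ := Quot.exists_rep x
    obtain ⟨k, -, hb⟩ := twistRel_of_mk_eq_mk hxb
    exact ⟨k, f a, ⟨a, (mk_mem_iff_mem_slice hW g₀ a).mp hx, rfl⟩, hb.symm⟩
  · rintro ⟨k, _, ⟨a, ha, rfl⟩, rfl⟩
    exact ⟨Quot.mk _ (g * k, a), (mk_mem_iff_mem_slice hW _ a).mpr ha,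
      Quot.sound ⟨k, by simp [mul_assoc], rfl⟩⟩

theorem isOpen_map_image [TopologicalSpace G] [TopologicalSpace A] [TopologicalSpace B]
    [ContinuousConstSMul K B] (hHK : H ≤ K) (f : A → B)
    (hf : ∀ (h : H) (a : A), f (h • a) = (⟨(h : G), hHK h.2⟩ : K) • f a)
    (hopen : ∀ U : Set A, IsOpen U → (∀ (h : H) (a : A), a ∈ U → h • a ∈ U) →
      IsOpen (f '' U))
    {W : Set (Quot (twistRel H A))} (hWo : IsOpen W)
    (hW : ∀ (g : G) (x : Quot (twistRel H A)), x ∈ W → leftMul H A g x ∈ W) :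
    IsOpen (map hHK f hf '' W) := by
  have hU : IsOpen (f '' slice H A W) :=
    hopen _ (isOpen_slice hWo) fun h _ ha => smul_mem_slice hW h ha
  rw [isOpen_coinduced, mk_preimage_map_image hHK f hf hW]
  exact (isOpen_iUnion fun k => hU.smul k).preimage continuous_snd

end TwistedProduct

open TwistedProduct in
theorem statement1_general {G : Type*} [Group G] [TopologicalSpace G]
    (H K : Subgroup G) (hHK : H ≤ K)
    {A B : Type*} [TopologicalSpace A] [TopologicalSpace B]
    [MulAction H A]
    [MulAction K B] [ContinuousSMul K B]
    (f : A → B)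
    (hf : ∀ (h : H) (a : A), f (h • a) = (⟨(h : G), hHK h.2⟩ : K) • f a)
    (hopen : ∀ U : Set A, IsOpen U → (∀ (h : H) (a : A), a ∈ U → h • a ∈ U) →
      IsOpen (f '' U)) :
    ∃ (F : Quot (twistRel H A) → Quot (twistRel K B))
      (αA : G → Quot (twistRel H A) → Quot (twistRel H A)),
      (∀ (g : G) (a : A), F (Quot.mk _ (g, a)) = Quot.mk _ (g, f a)) ∧
      (∀ (g' g : G) (a : A), αA g' (Quot.mk _ (g, a)) = Quot.mk _ (g' * g, a)) ∧
      (∀ W : Set (Quot (twistRel H A)), IsOpen W →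
        (∀ (g : G) (x : Quot (twistRel H A)), x ∈ W → αA g x ∈ W) →
        IsOpen (F '' W)) :=
  ⟨map hHK f hf, leftMul H A, fun _ _ => rfl, fun _ _ _ => rfl,
    fun _ hWo hW => isOpen_map_image hHK f hf hopen hWo hW⟩

theorem statement1 {G : Type*} [Group G] [TopologicalSpace G] [IsTopologicalGroup G]
    (H K : Subgroup G) (hHK : H ≤ K)
    {A B : Type*} [TopologicalSpace A] [TopologicalSpace B]
    [MulAction H A] [ContinuousSMul H A]
    [MulAction K B] [ContinuousSMul K B]
    (f : A → B)
    (hf : ∀ (h : H) (a : A), f (h • a) = (⟨(h : G), hHK h.2⟩ : K) • f a)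
    (hopen : ∀ U : Set A, IsOpen U → (∀ (h : H) (a : A), a ∈ U → h • a ∈ U) →
      IsOpen (f '' U)) :
    ∃ (F : Quot (twistRel H A) → Quot (twistRel K B))
      (αA : G → Quot (twistRel H A) → Quot (twistRel H A)),
      (∀ (g : G) (a : A), F (Quot.mk _ (g, a)) = Quot.mk _ (g, f a)) ∧
      (∀ (g' g : G) (a : A), αA g' (Quot.mk _ (g, a)) = Quot.mk _ (g' * g, a)) ∧
      (∀ W : Set (Quot (twistRel H A)), IsOpen W →
        (∀ (g : G) (x : Quot (twistRel H A)), x ∈ W → αA g x ∈ W) →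
        IsOpen (F '' W)) :=
  statement1_general H K hHK f hf hopen
end

section
/- Let Δ₁ be a compact convex polytope in ℝ^N, i.e. the convex hull of a finite subset of ℝ^N. For 0 < r ≤ ∞ set Δ_{<r} = { a•δ : 0 ≤ a < r, δ ∈ Δ₁ }, and let Δ = Δ_{<∞} = { a•δ : a ≥ 0, δ ∈ Δ₁ }. Then for every finite r > 0, the set Δ_{<r} is an open subset of Δ, where Δ carries the subspace topology induced from ℝ^N. -/
/-!
Write `φ c = ∑ₛ c s • s` for `c : S → ℝ`. Then `Δ` is the image under `φ` of the nonnegative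
orthant and `Δ_{<r}` the image of `{c ≥ 0 | ∑ c < r}`, so it suffices that the points of `Δ` all of
whose nonnegative preimages have sum `≥ r` form a closed set. Let `yₙ → x` be such points and pick
preimages `cₙ` of least sum. These are bounded by `C ‖yₙ‖`: otherwise, after normalising, a
nonzero `u ≥ 0` with `φ u = 0` could be subtracted from some `cₙ`. So a subsequence converges to a
preimage `c` of `x`. If `x` had a preimage `d ≥ 0` with `∑ d < r`, then for small `θ > 0` and large
`n` the vector `cₙ + (1 - θ) (d - c)` would be a nonnegative preimage of `yₙ` with sum `< r`.
-/

open Filter Topology Set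

section NonnegPreimage

variable {ι E : Type*} [Fintype ι] [NormedAddCommGroup E] [NormedSpace ℝ E]

lemma eventually_nonneg_add {α : Type*} {l : Filter α} {c : α → ι → ℝ} {c₀ v : ι → ℝ}
    (hc : Tendsto c l (𝓝 c₀)) (hc0 : ∀ a, 0 ≤ c a) (hv : ∀ i, 0 ≤ v i ∨ 0 < c₀ i + v i) :
    ∀ᶠ a in l, 0 ≤ c a + v := by
  have h : ∀ i, ∀ᶠ a in l, 0 ≤ c a i + v i := fun i => (hv i).elim
    (fun hvi => Eventually.of_forall fun a => add_nonneg (hc0 a i) hvi)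
    (fun hpos => (((tendsto_pi_nhds.1 hc i).add_const (v i)).eventually (lt_mem_nhds hpos)).mono
      fun _ => le_of_lt)
  exact (eventually_all.2 h).mono fun _ ha i => ha i

variable (φ : (ι → ℝ) →ₗ[ℝ] E)

def IsMinSumNonneg (c : ι → ℝ) : Prop :=
  0 ≤ c ∧ ∀ d, 0 ≤ d → φ d = φ c → ∑ i, c i ≤ ∑ i, d i

variable {φ} in
lemma IsMinSumNonneg.smul {c : ι → ℝ} (hc : IsMinSumNonneg φ c) {t : ℝ} (ht : 0 < t) :
    IsMinSumNonneg φ (t • c) := by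
  refine ⟨smul_nonneg ht.le hc.1, fun d hd hφd => ?_⟩
  have h := hc.2 (t⁻¹ • d) (smul_nonneg (inv_nonneg.2 ht.le) hd) (by
    rw [map_smul, hφd, map_smul, inv_smul_smul₀ ht.ne'])
  simp only [Pi.smul_apply, smul_eq_mul, ← Finset.mul_sum] at h ⊢
  rwa [← mul_le_mul_iff_of_pos_left ht, mul_inv_cancel_left₀ ht.ne'] at h

lemma exists_isMinSumNonneg {c : ι → ℝ} (hc : 0 ≤ c) :
    ∃ c', IsMinSumNonneg φ c' ∧ φ c' = φ c := by
  set K := {d : ι → ℝ | 0 ≤ d ∧ φ d = φ c ∧ ∑ i, d i ≤ ∑ i, c i}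
  have hsum : Continuous fun d : ι → ℝ => ∑ i, d i := by fun_prop
  have hK : IsCompact K := by
    refine (isCompact_Icc (a := 0) (b := fun _ => ∑ i, c i)).of_isClosed_subset ?_ fun d hd =>
      ⟨hd.1, fun i => (Finset.single_le_sum (fun j _ => hd.1 j) (Finset.mem_univ i)).trans hd.2.2⟩
    exact (isClosed_le continuous_const continuous_id).inter
      ((isClosed_eq φ.continuous_of_finiteDimensional continuous_const).inter
        (isClosed_le hsum continuous_const))
  obtain ⟨c', ⟨hc'0, hφc', hc'c⟩, hmin⟩ :=
    hK.exists_isMinOn ⟨c, hc, rfl, le_rfl⟩ hsum.continuousOn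
  refine ⟨c', ⟨hc'0, fun d hd hφd => ?_⟩, hφc'⟩
  by_cases hdc : ∑ i, d i ≤ ∑ i, c i
  · exact hmin ⟨hd, hφd.trans hφc', hdc⟩
  · linarith

lemma exists_sum_le_mul_norm_of_isMinSumNonneg :
    ∃ C, 0 ≤ C ∧ ∀ c, IsMinSumNonneg φ c → ∑ i, c i ≤ C * ‖φ c‖ := by
  by_contra! h
  choose c hc hlt using fun n : ℕ => h (n + 1) (by positivity)
  have hpos n : 0 < ∑ i, c n i := lt_of_le_of_lt (by positivity) (hlt n)
  set u := fun n => (∑ i, c n i)⁻¹ • c n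
  have hu n : u n ∈ stdSimplex ℝ ι := by
    refine ⟨fun i => mul_nonneg (inv_nonneg.2 (hpos n).le) ((hc n).1 i), ?_⟩
    simp only [u, Pi.smul_apply, smul_eq_mul, ← Finset.mul_sum, inv_mul_cancel₀ (hpos n).ne']
  have hφu : Tendsto (fun n => φ (u n)) atTop (𝓝 0) := by
    refine squeeze_zero_norm (fun n => ?_) tendsto_one_div_add_atTop_nhds_zero_nat
    rw [map_smul, norm_smul, Real.norm_of_nonneg (inv_nonneg.2 (hpos n).le),
      inv_mul_le_iff₀ (hpos n), mul_one_div, le_div_iff₀ (by positivity), mul_comm]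
    exact (hlt n).le
  obtain ⟨u₀, hu₀, ψ, hψ, hlim⟩ := (isCompact_stdSimplex ℝ ι).tendsto_subseq hu
  have hφu₀ : φ u₀ = 0 := tendsto_nhds_unique
    ((φ.continuous_of_finiteDimensional.tendsto u₀).comp hlim) (hφu.comp hψ.tendsto_atTop)
  -- Eventually `u ∘ ψ ≥ u₀ / 2`, so removing `u₀ / 2` keeps the image and lowers the sum.
  have hv i : 0 ≤ (-(1 / 2 : ℝ) • u₀) i ∨ 0 < u₀ i + (-(1 / 2 : ℝ) • u₀) i := by
    rcases (hu₀.1 i).eq_or_lt with h0 | h0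
    · simp [← h0]
    · right; simp only [Pi.smul_apply, smul_eq_mul]; linarith
  obtain ⟨k, hk⟩ := (eventually_nonneg_add hlim (fun k i => (hu (ψ k)).1 i) hv).exists
  have hmin := ((hc (ψ k)).smul (inv_pos.2 (hpos (ψ k)))).2 _ hk (by simp [u, hφu₀])
  simp only [Function.comp_apply, Pi.add_apply, Pi.smul_apply, smul_eq_mul,
    Finset.sum_add_distrib, ← Finset.mul_sum, hu₀.2, inv_mul_cancel₀ (hpos (ψ k)).ne',
    (hu (ψ k)).2] at hmin
  linarith

lemma eventually_exists_nonneg_sum_lt {α : Type*} {l : Filter α} {c : α → ι → ℝ}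
    {c₀ d : ι → ℝ} {r : ℝ} (hc : Tendsto c l (𝓝 c₀)) (hc0 : ∀ a, 0 ≤ c a) (hd : 0 ≤ d)
    (hφd : φ d = φ c₀) (hdr : ∑ i, d i < r) :
    ∀ᶠ a in l, ∃ g, 0 ≤ g ∧ φ g = φ (c a) ∧ ∑ i, g i < r := by
  obtain ⟨θ, ⟨hθ0, hθ1⟩, hθr⟩ : ∃ θ ∈ Ioo (0 : ℝ) 1,
      θ * ∑ i, c₀ i + (1 - θ) * ∑ i, d i < r := by
    have h : Tendsto (fun θ : ℝ => θ * ∑ i, c₀ i + (1 - θ) * ∑ i, d i) (𝓝 0)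
        (𝓝 (∑ i, d i)) := by
      simpa using ((by fun_prop : Continuous fun θ : ℝ =>
        θ * ∑ i, c₀ i + (1 - θ) * ∑ i, d i).tendsto 0)
    exact (Eventually.and (Ioo_mem_nhdsGT one_pos)
      ((h.eventually (gt_mem_nhds hdr)).filter_mono nhdsWithin_le_nhds)).exists
  -- `c a + (1 - θ) (d - c₀)` has the image of `c a`, and is nonnegative for `a` near the limit.
  set v := (1 - θ) • (d - c₀)
  have hv i : 0 ≤ v i ∨ 0 < c₀ i + v i := by
    have hdi : 0 ≤ d i := hd i
    simp only [v, Pi.smul_apply, Pi.sub_apply, smul_eq_mul]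
    rcases le_or_gt (c₀ i) 0 with h | h
    · exact Or.inl (mul_nonneg (by linarith) (by linarith))
    · right; nlinarith [mul_pos hθ0 h, mul_nonneg (sub_pos.2 hθ1).le hdi]
  have hsum : Tendsto (fun a => ∑ i, (c a + v) i) l
      (𝓝 (θ * ∑ i, c₀ i + (1 - θ) * ∑ i, d i)) := by
    have hval : ∑ i, (c₀ + v) i = θ * ∑ i, c₀ i + (1 - θ) * ∑ i, d i := by
      simp only [v, Pi.add_apply, Pi.smul_apply, Pi.sub_apply, smul_eq_mul,
        Finset.sum_add_distrib, ← Finset.mul_sum, Finset.sum_sub_distrib]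
      ring
    rw [← hval]
    exact ((continuous_finsetSum Finset.univ fun i _ => continuous_apply i).tendsto
      (c₀ + v)).comp (hc.add_const v)
  filter_upwards [eventually_nonneg_add hc hc0 hv, hsum.eventually (gt_mem_nhds hθr)]
    with a hnonneg hlt
  exact ⟨c a + v, hnonneg, by simp [v, hφd], hlt⟩

lemma isClosed_setOf_forall_le_sum (r : ℝ) :
    IsClosed {y | (∃ c, 0 ≤ c ∧ φ c = y) ∧ ∀ c, 0 ≤ c → φ c = y → r ≤ ∑ i, c i} := by
  refine IsSeqClosed.isClosed fun y x hy hyx => ?_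
  choose c₁ hc₁ hφc₁ using fun n => (hy n).1
  choose c hc hφc using fun n => exists_isMinSumNonneg φ (hc₁ n)
  obtain ⟨C, hC0, hC⟩ := exists_sum_le_mul_norm_of_isMinSumNonneg φ
  obtain ⟨B, hB⟩ := isBounded_iff_forall_norm_le.1 (Metric.isBounded_range_of_tendsto y hyx)
  have hbox n : c n ∈ Icc 0 fun _ => C * B := by
    refine ⟨(hc n).1, fun i => ?_⟩
    calc c n i ≤ ∑ j, c n j := Finset.single_le_sum (fun j _ => (hc n).1 j) (Finset.mem_univ i)
      _ ≤ C * ‖φ (c n)‖ := hC _ (hc n)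
      _ ≤ C * B := by
        rw [hφc, hφc₁]
        exact mul_le_mul_of_nonneg_left (hB _ (mem_range_self n)) hC0
  obtain ⟨c₀, hc₀, ψ, hψ, hlim⟩ := isCompact_Icc.tendsto_subseq hbox
  have hφc₀ : φ c₀ = x := tendsto_nhds_unique
    ((φ.continuous_of_finiteDimensional.tendsto c₀).comp hlim)
    (by simpa [Function.comp_def, hφc, hφc₁] using hyx.comp hψ.tendsto_atTop)
  refine ⟨⟨c₀, hc₀.1, hφc₀⟩, fun d hd hφd => le_of_not_gt fun hdr => ?_⟩
  obtain ⟨k, g, hg, hφg, hgr⟩ := (eventually_exists_nonneg_sum_lt φ hlim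
    (fun k => (hc (ψ k)).1) hd (hφd.trans hφc₀.symm) hdr).exists
  have := (hy (ψ k)).2 g hg (by rw [hφg, Function.comp_apply, hφc, hφc₁])
  linarith

theorem exists_isOpen_image_sum_lt_eq_inter (r : ℝ) :
    ∃ V : Set E, IsOpen V ∧ {y | ∃ c, 0 ≤ c ∧ ∑ i, c i < r ∧ φ c = y} =
      V ∩ {y | ∃ c, 0 ≤ c ∧ φ c = y} := by
  refine ⟨_, (isClosed_setOf_forall_le_sum φ r).isOpen_compl, ?_⟩
  ext y
  simp only [mem_ofPred_eq, mem_inter_iff, mem_compl_iff, not_and, not_forall, not_le]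
  constructor
  · rintro ⟨c, hc, hcr, rfl⟩
    exact ⟨fun _ => ⟨c, hc, rfl, hcr⟩, c, hc, rfl⟩
  · rintro ⟨hT, hP⟩
    obtain ⟨c, hc, hφc, hcr⟩ := hT hP
    exact ⟨c, hc, hcr, hφc⟩

end NonnegPreimage

section Cone

variable {ι E : Type*} [Fintype ι] [AddCommGroup E] [Module ℝ E]

lemma convexHull_range_eq_image_stdSimplex (v : ι → E) :
    convexHull ℝ (range v) = Fintype.linearCombination ℝ v '' stdSimplex ℝ ι := by
  classical
  rw [← convexHull_rangle_single_eq_stdSimplex, LinearMap.image_convexHull, ← range_comp]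
  congr 2
  ext i
  simp [Fintype.linearCombination_apply_single]

lemma exists_smul_mem_convexHull_range_iff [Nonempty ι] (v : ι → E) (p : ℝ → Prop) (x : E) :
    (∃ (a : ℝ) (δ : E), 0 ≤ a ∧ p a ∧ δ ∈ convexHull ℝ (range v) ∧ x = a • δ) ↔
      ∃ c, 0 ≤ c ∧ p (∑ i, c i) ∧ Fintype.linearCombination ℝ v c = x := by
  classical
  simp only [convexHull_range_eq_image_stdSimplex, mem_image]
  constructor
  · rintro ⟨a, _, ha, hpa, ⟨w, hw, rfl⟩, rfl⟩
    refine ⟨a • w, smul_nonneg ha fun i => hw.1 i, ?_, map_smul _ _ _⟩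
    simpa [← Finset.mul_sum, hw.2] using hpa
  · rintro ⟨c, hc, hp, rfl⟩
    have hsum : 0 ≤ ∑ i, c i := Finset.sum_nonneg fun i _ => hc i
    rcases hsum.eq_or_lt with h0 | hpos
    · have hc0 : c = 0 := funext fun i =>
        (Finset.sum_eq_zero_iff_of_nonneg fun i _ => hc i).1 h0.symm i (Finset.mem_univ i)
      obtain ⟨i⟩ := ‹Nonempty ι›
      exact ⟨_, _, hsum, hp, ⟨Pi.single i 1, single_mem_stdSimplex ℝ i, rfl⟩, by simp [hc0]⟩
    · refine ⟨_, _, hsum, hp,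
        ⟨(∑ i, c i)⁻¹ • c, ⟨fun i => mul_nonneg (inv_nonneg.2 hsum) (hc i), ?_⟩, rfl⟩, ?_⟩
      · simp [← Finset.mul_sum, inv_mul_cancel₀ hpos.ne']
      · rw [map_smul, smul_smul, mul_inv_cancel₀ hpos.ne', one_smul]

end Cone

theorem statement2_general (N : ℕ) (S : Finset (Fin N → ℝ)) (r : ℝ) :
    ∃ V : Set (Fin N → ℝ), IsOpen V ∧
      {x : Fin N → ℝ | ∃ (a : ℝ) (δ : Fin N → ℝ),
          0 ≤ a ∧ a < r ∧ δ ∈ convexHull ℝ (S : Set (Fin N → ℝ)) ∧ x = a • δ}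
        = V ∩ {x : Fin N → ℝ | ∃ (a : ℝ) (δ : Fin N → ℝ),
            0 ≤ a ∧ δ ∈ convexHull ℝ (S : Set (Fin N → ℝ)) ∧ x = a • δ} := by
  rcases S.eq_empty_or_nonempty with rfl | hS
  · exact ⟨univ, isOpen_univ, by simp⟩
  have : Nonempty S := hS.coe_sort
  have hrange : (S : Set (Fin N → ℝ)) = range ((↑) : S → Fin N → ℝ) := Subtype.range_coe.symm
  obtain ⟨V, hV, hVeq⟩ :=
    exists_isOpen_image_sum_lt_eq_inter (Fintype.linearCombination ℝ ((↑) : S → Fin N → ℝ)) r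
  refine ⟨V, hV, ?_⟩
  convert hVeq using 2 <;> ext x <;> rw [hrange]
  · exact exists_smul_mem_convexHull_range_iff ((↑) : S → Fin N → ℝ) (· < r) x
  · simpa using exists_smul_mem_convexHull_range_iff ((↑) : S → Fin N → ℝ) (fun _ => True) x

theorem statement2 (N : ℕ) (S : Finset (Fin N → ℝ)) (r : ℝ) (hr : 0 < r) :
    ∃ V : Set (Fin N → ℝ), IsOpen V ∧
      {x : Fin N → ℝ | ∃ (a : ℝ) (δ : Fin N → ℝ),
          0 ≤ a ∧ a < r ∧ δ ∈ convexHull ℝ (S : Set (Fin N → ℝ)) ∧ x = a • δ}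
        = V ∩ {x : Fin N → ℝ | ∃ (a : ℝ) (δ : Fin N → ℝ),
            0 ≤ a ∧ δ ∈ convexHull ℝ (S : Set (Fin N → ℝ)) ∧ x = a • δ} :=
  statement2_general N S r
end

section
/- The map ℝ³ × ℝ³ → ℝ³ given by (q, p) ↦ q × p (the cross product) is not an open map. -/
/-! `q ⨯₃ p` is orthogonal to `q`, so on the open set of pairs `(q, p)` with `q ⬝ᵥ a ≠ 0` the
cross product never takes the values `t • a`, `t ≠ 0`. This set contains `(a, a)`, which maps to
`0`, and `t • a → 0` as `t → 0`, so its image is not a neighbourhood of `0`. -/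

open Filter Topology Matrix

theorem cross_ne_smul_of_dotProduct_ne_zero {R : Type*} [CommRing R] [NoZeroDivisors R]
    {q a : Fin 3 → R} (hq : q ⬝ᵥ a ≠ 0) (p : Fin 3 → R) {t : R} (ht : t ≠ 0) :
    q ⨯₃ p ≠ t • a := by
  intro h
  have horth : q ⬝ᵥ (t • a) = 0 := h ▸ dot_self_cross q p
  rw [dotProduct_smul, smul_eq_mul] at horth
  exact mul_ne_zero ht hq horth

theorem cross_image_dotProduct_ne_zero_notMem_nhds_zero {a : Fin 3 → ℝ} :
    (fun qp : (Fin 3 → ℝ) × (Fin 3 → ℝ) => qp.1 ⨯₃ qp.2) '' {qp | qp.1 ⬝ᵥ a ≠ 0} ∉ 𝓝 0 := by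
  intro himage
  have hline : Tendsto (fun t : ℝ => t • a) (𝓝[≠] 0) (𝓝 0) := by
    simpa using (tendsto_nhdsWithin_of_tendsto_nhds (tendsto_id (x := 𝓝 (0 : ℝ)))).smul_const a
  obtain ⟨t, ⟨⟨q, p⟩, hq, hqp⟩, ht⟩ :=
    ((hline.eventually himage).and self_mem_nhdsWithin).exists
  exact cross_ne_smul_of_dotProduct_ne_zero hq p ht hqp

theorem statement6 :
    ¬ IsOpenMap (fun qp : (Fin 3 → ℝ) × (Fin 3 → ℝ) => crossProduct qp.1 qp.2) := by
  intro hopen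
  set a : Fin 3 → ℝ := ![1, 0, 0]
  have hU : IsOpen {qp : (Fin 3 → ℝ) × (Fin 3 → ℝ) | qp.1 ⬝ᵥ a ≠ 0} :=
    isOpen_ne_fun (by fun_prop) continuous_const
  refine cross_image_dotProduct_ne_zero_notMem_nhds_zero ((hopen _ hU).mem_nhds ⟨(a, a), ?_, ?_⟩)
  · simp [a]
  · exact cross_self a
end

section
/- Let Γ : Fin N → ℝ. The momentum map Φ = (Φ_ℂ, Φ_ℝ) : ℂ^N → ℂ × ℝ is equivariant with respect to the standard coadjoint action of SE(2), i.e. for all θ ∈ ℝ, w ∈ ℂ and z : Fin N → ℂ one has Φ_ℂ(λk, e^{iθ}·zₖ + w) = e^{iθ}·Φ_ℂ(z) and Φ_ℝ(λk, e^{iθ}·zₖ + w) = Φ_ℝ(z) + Im( conj(w)·e^{iθ}·Φ_ℂ(z) ), if and only if ∑ₖ Γₖ = 0. -/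
/-!
Moving all vortices by a rigid motion `ζ ↦ u ζ + w` (with `|u| = 1`) changes the linear impulse
`Φ_ℂ` to `u Φ_ℂ + i (∑ Γₖ) w` and the angular impulse `Φ_ℝ` to
`Φ_ℝ + Im(w̄ u Φ_ℂ) + (∑ Γₖ) |w|² / 2`, by expanding `|u zₖ + w|²`. So the momentum map is
equivariant when the total vorticity vanishes; conversely, the first identity at `u = w = 1`,
`z = 0` reads `i ∑ Γₖ = 0`.
-/

open Complex Finset

noncomputable section

namespace PointVortex

variable {ι : Type*} [Fintype ι] (Γ : ι → ℝ)

def momentumC (z : ι → ℂ) : ℂ := I * ∑ k, (Γ k : ℂ) * z k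

def momentumR (z : ι → ℂ) : ℝ := ∑ k, Γ k * ‖z k‖ ^ 2 / 2

theorem momentumC_affine (u w : ℂ) (z : ι → ℂ) :
    momentumC Γ (fun k ↦ u * z k + w) = u * momentumC Γ z + I * (∑ k, Γ k : ℝ) * w := by
  simp only [momentumC, mul_add, sum_add_distrib, ofReal_sum, sum_mul, mul_sum]
  congr 1 <;> exact sum_congr rfl fun k _ ↦ by ring

theorem sq_norm_add_eq (a w : ℂ) :
    ‖a + w‖ ^ 2 = ‖a‖ ^ 2 + ‖w‖ ^ 2 + 2 * (starRingEnd ℂ w * a).re := by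
  rw [Complex.sq_norm, normSq_add, ← Complex.sq_norm, ← Complex.sq_norm, mul_comm (starRingEnd ℂ w)]

theorem im_conj_mul_momentumC (v : ℂ) (z : ι → ℂ) :
    (v * momentumC Γ z).im = ∑ k, Γ k * (v * z k).re := by
  have : v * momentumC Γ z = (∑ k, (Γ k : ℂ) * (v * z k)) * I := by
    simp only [momentumC, mul_sum]
    rw [sum_mul]
    exact sum_congr rfl fun k _ ↦ by ring
  simp only [this, mul_I_im, re_sum, re_ofReal_mul]

theorem momentumR_affine {u : ℂ} (hu : ‖u‖ = 1) (w : ℂ) (z : ι → ℂ) :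
    momentumR Γ (fun k ↦ u * z k + w) =
      momentumR Γ z + (starRingEnd ℂ w * (u * momentumC Γ z)).im
        + (∑ k, Γ k) * ‖w‖ ^ 2 / 2 := by
  rw [← mul_assoc, im_conj_mul_momentumC]
  simp only [momentumR, sq_norm_add_eq, norm_mul, hu, one_mul, mul_assoc, sum_mul, sum_div,
    ← sum_add_distrib]
  exact sum_congr rfl fun k _ ↦ by ring

end PointVortex

end

open PointVortex in
theorem statement8 (N : ℕ) (Γ : Fin N → ℝ) :
    (∀ (θ : ℝ) (w : ℂ) (z : Fin N → ℂ),
        Complex.I * ∑ k, (Γ k : ℂ) * (Complex.exp (θ * Complex.I) * z k + w)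
          = Complex.exp (θ * Complex.I) * (Complex.I * ∑ k, (Γ k : ℂ) * z k) ∧
        ∑ k, Γ k * ‖Complex.exp (θ * Complex.I) * z k + w‖ ^ 2 / 2
          = ∑ k, Γ k * ‖z k‖ ^ 2 / 2
            + ((starRingEnd ℂ) w * (Complex.exp (θ * Complex.I)
                * (Complex.I * ∑ k, (Γ k : ℂ) * z k))).im)
      ↔ ∑ k, Γ k = 0 := by
  constructor
  · intro h
    have hC : momentumC Γ (fun k ↦ exp (0 * I) * 0 + 1) = exp (0 * I) * momentumC Γ 0 :=
      (h 0 1 0).1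
    rw [momentumC_affine] at hC
    exact_mod_cast (by simpa [momentumC] using hC : ∑ k, (Γ k : ℂ) = 0)
  · intro hΓ θ w z
    have hC := momentumC_affine Γ (exp (θ * I)) w z
    have hR := momentumR_affine Γ (norm_exp_ofReal_mul_I θ) w z
    rw [hΓ, ofReal_zero, mul_zero, zero_mul, add_zero] at hC
    rw [hΓ, zero_mul, zero_div, add_zero] at hR
    exact ⟨hC, hR⟩
end

section
/- Let z₁, z₂, z₃ ∈ ℂ with z₁ ≠ z₃ form an equilateral configuration, i.e. z₂ − z₃ = e^{iπ/3}(z₁ − z₃) or z₂ − z₃ = e^{−iπ/3}(z₁ − z₃). Then exp(2π·h) = |Φ_ℂ|³ / (3·√3), where h and Φ_ℂ are evaluated at (z₁, z₂, z₃). Equivalently, |z₁−z₃|²·|z₂−z₃|² / |z₁−z₂| = |z₁ + z₂ − 2z₃|³ / (3√3). -/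
/-!
With `w = z₁ - z₃` and `ζ = exp (± iπ/3)` we have `z₂ - z₃ = ζ w`, `z₁ - z₂ = (1 - ζ) w` and
`z₁ + z₂ - 2 z₃ = (1 + ζ) w`. Because `|ζ| = 1` and `Re ζ = 1/2`, `|1 - ζ| = 1` and `|1 + ζ| = √3`,
so all sides have length `a = |w|` and `|Φ_ℂ| = √3 a`; both sides of each identity equal `a³`.
-/

namespace Complex

lemma norm_one_sub_eq_one {ζ : ℂ} (hζ : ‖ζ‖ = 1) (hre : ζ.re = 1 / 2) : ‖1 - ζ‖ = 1 := by
  have hsq : ‖1 - ζ‖ ^ 2 = 1 ^ 2 := by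
    rw [Complex.sq_norm, normSq_sub, normSq_eq_norm_sq ζ, hζ]
    simp [hre]
  exact (sq_eq_sq₀ (norm_nonneg _) zero_le_one).1 hsq

lemma norm_one_add_eq_sqrt_three {ζ : ℂ} (hζ : ‖ζ‖ = 1) (hre : ζ.re = 1 / 2) :
    ‖1 + ζ‖ = Real.sqrt 3 := by
  have hsq : ‖1 + ζ‖ ^ 2 = 3 := by
    rw [Complex.sq_norm, normSq_add, normSq_eq_norm_sq ζ, hζ]
    simp [hre]
    norm_num
  rw [← hsq, Real.sqrt_sq (norm_nonneg _)]

lemma norm_exp_pi_div_three_mul_I : ‖exp (Real.pi / 3 * I)‖ = 1 := by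
  simpa using norm_exp_ofReal_mul_I (Real.pi / 3)

lemma norm_exp_neg_pi_div_three_mul_I : ‖exp (-(Real.pi / 3) * I)‖ = 1 := by
  simpa using norm_exp_ofReal_mul_I (-(Real.pi / 3))

lemma re_exp_pi_div_three_mul_I : (exp (Real.pi / 3 * I)).re = 1 / 2 := by
  simpa [Real.cos_pi_div_three] using exp_ofReal_mul_I_re (Real.pi / 3)

lemma re_exp_neg_pi_div_three_mul_I : (exp (-(Real.pi / 3) * I)).re = 1 / 2 := by
  simpa [Real.cos_pi_div_three] using exp_ofReal_mul_I_re (-(Real.pi / 3))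

lemma norms_of_sub_eq_mul_sub {z₁ z₂ z₃ ζ : ℂ} (hζ : ‖ζ‖ = 1) (hre : ζ.re = 1 / 2)
    (h : z₂ - z₃ = ζ * (z₁ - z₃)) :
    ‖z₂ - z₃‖ = ‖z₁ - z₃‖ ∧ ‖z₁ - z₂‖ = ‖z₁ - z₃‖ ∧
      ‖z₁ + z₂ - 2 * z₃‖ = Real.sqrt 3 * ‖z₁ - z₃‖ := by
  have h12 : z₁ - z₂ = (1 - ζ) * (z₁ - z₃) := by linear_combination -h
  have hΦ : z₁ + z₂ - 2 * z₃ = (1 + ζ) * (z₁ - z₃) := by linear_combination h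
  refine ⟨?_, ?_, ?_⟩
  · rw [h, norm_mul, hζ, one_mul]
  · rw [h12, norm_mul, norm_one_sub_eq_one hζ hre, one_mul]
  · rw [hΦ, norm_mul, norm_one_add_eq_sqrt_three hζ hre]

end Complex

lemma sqrt_three_mul_pow_three_div (a : ℝ) : (Real.sqrt 3 * a) ^ 3 / (3 * Real.sqrt 3) = a ^ 3 := by
  have h3 : Real.sqrt 3 ^ 2 = 3 := Real.sq_sqrt (by norm_num)
  rw [mul_pow, pow_succ, h3]
  field_simp

theorem statement9 (z₁ z₂ z₃ : ℂ) (h13 : z₁ ≠ z₃)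
    (heq : z₂ - z₃ = Complex.exp (Real.pi / 3 * Complex.I) * (z₁ - z₃) ∨
           z₂ - z₃ = Complex.exp (-(Real.pi / 3) * Complex.I) * (z₁ - z₃)) :
    Real.exp (2 * Real.pi * (-(1 / (2 * Real.pi)) *
        (Real.log (‖z₁ - z₂‖) - 2 * Real.log (‖z₁ - z₃‖)
          - 2 * Real.log (‖z₂ - z₃‖))))
      = ‖Complex.I * (z₁ + z₂ - 2 * z₃)‖ ^ 3 / (3 * Real.sqrt 3) ∧
    ‖z₁ - z₃‖ ^ 2 * ‖z₂ - z₃‖ ^ 2 / ‖z₁ - z₂‖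
      = ‖z₁ + z₂ - 2 * z₃‖ ^ 3 / (3 * Real.sqrt 3) := by
  obtain ⟨ζ, hζ, hre, h⟩ : ∃ ζ : ℂ, ‖ζ‖ = 1 ∧ ζ.re = 1 / 2 ∧ z₂ - z₃ = ζ * (z₁ - z₃) := by
    rcases heq with h | h
    · exact ⟨_, Complex.norm_exp_pi_div_three_mul_I, Complex.re_exp_pi_div_three_mul_I, h⟩
    · exact ⟨_, Complex.norm_exp_neg_pi_div_three_mul_I, Complex.re_exp_neg_pi_div_three_mul_I, h⟩
  obtain ⟨h23, h12, hΦ⟩ := Complex.norms_of_sub_eq_mul_sub hζ hre h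
  have ha : 0 < ‖z₁ - z₃‖ := norm_pos_iff.2 (sub_ne_zero.2 h13)
  rw [h23, h12, norm_mul, Complex.norm_I, one_mul, hΦ, sqrt_three_mul_pow_three_div]
  constructor
  · have hlog : 2 * Real.pi * (-(1 / (2 * Real.pi)) * (Real.log ‖z₁ - z₃‖
        - 2 * Real.log ‖z₁ - z₃‖ - 2 * Real.log ‖z₁ - z₃‖)) = Real.log (‖z₁ - z₃‖ ^ 3) := by
      rw [Real.log_pow]
      field_simp
      ring
    rw [hlog, Real.exp_log (pow_pos ha 3)]
  · field_simp
end

section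
/- Let E > 0, and let z₁, z₂, z₃ ∈ ℂ with z₁ ≠ z₃ form an equilateral configuration, i.e. z₂ − z₃ = e^{iπ/3}(z₁ − z₃) or z₂ − z₃ = e^{−iπ/3}(z₁ − z₃). If |Φ_ℂ| < (√3·E)^{1/3}, where Φ_ℂ is evaluated at (z₁, z₂, z₃), then exp(2π·h) < E/3, where h is evaluated at (z₁, z₂, z₃). (Hence no equilateral relative equilibrium with momentum in the punctured neighbourhood V of Proposition 7.1 can lie in the sublevel set U.) -/
/-!
Write `z₂ - z₃ = ε (z₁ - z₃)` with `ε = e^{±iπ/3}`. Since `|ε| = 1` and `Re ε = 1/2`, also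
`|1 - ε| = 1` and `|1 + ε| = √3`, so all three sides equal `r = |z₁ - z₃|` and `|Φ_ℂ| = √3 r`.
Then `exp(2πh) = r²·r²/r = r³`, while cubing the momentum bound gives `3√3 r³ < √3 E`.
-/

open Complex

lemma Complex.norm_one_sub_of_norm_eq_one_of_re_eq_half {ε : ℂ} (hn : ‖ε‖ = 1)
    (hre : ε.re = 1 / 2) : ‖1 - ε‖ = 1 := by
  have hsq : ‖1 - ε‖ ^ 2 = 1 := by
    rw [Complex.sq_norm, normSq_sub, ← Complex.sq_norm ε, hn]
    norm_num [hre]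
  rw [← Real.sqrt_sq (norm_nonneg _), hsq, Real.sqrt_one]

lemma Complex.norm_one_add_of_norm_eq_one_of_re_eq_half {ε : ℂ} (hn : ‖ε‖ = 1)
    (hre : ε.re = 1 / 2) : ‖1 + ε‖ = Real.sqrt 3 := by
  have hsq : ‖1 + ε‖ ^ 2 = 3 := by
    rw [Complex.sq_norm, normSq_add, ← Complex.sq_norm ε, hn]
    norm_num [hre]
  rw [← hsq, Real.sqrt_sq (norm_nonneg _)]

lemma exists_rotation_of_equilateral {z₁ z₂ z₃ : ℂ}
    (heq : z₂ - z₃ = exp (Real.pi / 3 * I) * (z₁ - z₃) ∨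
      z₂ - z₃ = exp (-(Real.pi / 3) * I) * (z₁ - z₃)) :
    ∃ ε : ℂ, ‖ε‖ = 1 ∧ ε.re = 1 / 2 ∧ z₂ - z₃ = ε * (z₁ - z₃) := by
  rcases heq with h | h
  · refine ⟨_, ?_, ?_, h⟩
    · exact_mod_cast norm_exp_ofReal_mul_I (Real.pi / 3)
    · exact_mod_cast (exp_ofReal_mul_I_re (Real.pi / 3)).trans Real.cos_pi_div_three
  · refine ⟨_, ?_, ?_, h⟩
    · exact_mod_cast norm_exp_ofReal_mul_I (-(Real.pi / 3))
    · exact_mod_cast (exp_ofReal_mul_I_re (-(Real.pi / 3))).trans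
        ((Real.cos_neg _).trans Real.cos_pi_div_three)

section Equilateral

variable {z₁ z₂ z₃ ε : ℂ} (hn : ‖ε‖ = 1) (hre : ε.re = 1 / 2)
  (hε : z₂ - z₃ = ε * (z₁ - z₃))
include hn hε

lemma norm_sub₂₃_of_rotation : ‖z₂ - z₃‖ = ‖z₁ - z₃‖ := by
  rw [hε, norm_mul, hn, one_mul]

include hre

lemma norm_sub₁₂_of_rotation : ‖z₁ - z₂‖ = ‖z₁ - z₃‖ := by
  rw [show z₁ - z₂ = (1 - ε) * (z₁ - z₃) by linear_combination -hε, norm_mul,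
    Complex.norm_one_sub_of_norm_eq_one_of_re_eq_half hn hre, one_mul]

lemma norm_momentum_of_rotation : ‖z₁ + z₂ - 2 * z₃‖ = Real.sqrt 3 * ‖z₁ - z₃‖ := by
  rw [show z₁ + z₂ - 2 * z₃ = (1 + ε) * (z₁ - z₃) by linear_combination hε, norm_mul,
    Complex.norm_one_add_of_norm_eq_one_of_re_eq_half hn hre]

end Equilateral

lemma exp_vortex_energy {a b c : ℝ} (ha : 0 < a) (hb : 0 < b) (hc : 0 < c) :
    Real.exp (2 * Real.pi * (-(1 / (2 * Real.pi)) *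
      (Real.log a - 2 * Real.log b - 2 * Real.log c))) = b ^ 2 * c ^ 2 / a := by
  have harg : 2 * Real.pi * (-(1 / (2 * Real.pi)) *
      (Real.log a - 2 * Real.log b - 2 * Real.log c)) = Real.log (b ^ 2 * c ^ 2 / a) := by
    rw [Real.log_div (by positivity) ha.ne', Real.log_mul (by positivity) (by positivity),
      Real.log_pow, Real.log_pow]
    field_simp [Real.pi_ne_zero]
    push_cast
    ring
  rw [harg, Real.exp_log (by positivity)]

lemma pow_three_lt_of_lt_rpow_one_third {x y : ℝ} (hx : 0 ≤ x) (hy : 0 ≤ y)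
    (h : x < y ^ ((1 : ℝ) / 3)) : x ^ 3 < y := by
  rw [one_div, Real.lt_rpow_inv_iff_of_pos hx hy (by norm_num)] at h
  exact_mod_cast h

theorem statement10 (E : ℝ) (hE : 0 < E) (z₁ z₂ z₃ : ℂ) (h13 : z₁ ≠ z₃)
    (heq : z₂ - z₃ = Complex.exp (Real.pi / 3 * Complex.I) * (z₁ - z₃) ∨
           z₂ - z₃ = Complex.exp (-(Real.pi / 3) * Complex.I) * (z₁ - z₃))
    (hmom : ‖Complex.I * (z₁ + z₂ - 2 * z₃)‖
      < (Real.sqrt 3 * E) ^ ((1 : ℝ) / 3)) :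
    Real.exp (2 * Real.pi * (-(1 / (2 * Real.pi)) *
        (Real.log (‖z₁ - z₂‖) - 2 * Real.log (‖z₁ - z₃‖)
          - 2 * Real.log (‖z₂ - z₃‖))))
      < E / 3 := by
  obtain ⟨ε, hn, hre, hε⟩ := exists_rotation_of_equilateral heq
  set r := ‖z₁ - z₃‖
  have hr : 0 < r := norm_pos_iff.mpr (sub_ne_zero.mpr h13)
  rw [norm_sub₁₂_of_rotation hn hre hε, norm_sub₂₃_of_rotation hn hε, exp_vortex_energy hr hr hr]
  rw [norm_mul, norm_I, one_mul, norm_momentum_of_rotation hn hre hε] at hmom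
  have hcube := pow_three_lt_of_lt_rpow_one_third (by positivity) (by positivity) hmom
  have hsqrt3 : Real.sqrt 3 ^ 2 = 3 := Real.sq_sqrt (by norm_num)
  have hsqrt3_pos : 0 < Real.sqrt 3 := by positivity
  rw [show (Real.sqrt 3 * r) ^ 3 = Real.sqrt 3 * (3 * r ^ 3) by rw [mul_pow, pow_succ, hsqrt3]; ring] at hcube
  rw [show r ^ 2 * r ^ 2 / r = r ^ 3 by field_simp]
  linarith [(mul_lt_mul_iff_right₀ hsqrt3_pos).mp hcube]
end

section
/- Let r > 0. Suppose z₁, z₂, z₃ ∈ ℂ and w₁, w₂, w₃ ∈ ℂ both satisfy Φ_ℂ = 0 and Φ_ℝ = r (i.e. z₁ + z₂ − 2z₃ = 0 and (|z₁|² + |z₂|² − 2|z₃|²)/2 = r, and the same for w). Then the two configurations lie on the same SE(2)-orbit: there exist θ ∈ ℝ and c ∈ ℂ such that wₖ = e^{iθ}·zₖ + c for k = 1, 2, 3. (Hence the reduced space Φ⁻¹(0, r)/SE(2) is a single point.) -/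
/-!
The constraint `Φ_ℂ = 0` says that `z₃` is the midpoint of `z₁` and `z₂`, so a configuration is
`(z₃ + u, z₃ - u, z₃)`, and by the parallelogram law `Φ_ℝ = ‖u‖²`. Two configurations on the same
level set therefore have half-separations `u`, `v` of equal norm; the rotation taking `u` to `v`,
followed by the translation taking `z₃` to `w₃`, maps one configuration onto the other.
-/

open Complex

theorem Complex.exists_exp_mul_I_mul_eq_of_norm_eq {u v : ℂ} (h : ‖u‖ = ‖v‖) :
    ∃ θ : ℝ, exp (θ * I) * u = v := by
  refine ⟨arg v - arg u, ?_⟩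
  calc exp ((arg v - arg u : ℝ) * I) * u
      = exp ((arg v - arg u : ℝ) * I) * (‖u‖ * exp (arg u * I)) := by
        rw [norm_mul_exp_arg_mul_I]
    _ = ‖v‖ * exp (arg v * I) := by
        rw [h, mul_left_comm, ← exp_add]
        congr 3
        push_cast
        ring
    _ = v := norm_mul_exp_arg_mul_I v

theorem exists_eq_add_eq_sub_of_add_sub_two_mul_eq_zero {K : Type*} [Field K] [CharZero K]
    {z₁ z₂ z₃ : K} (h : z₁ + z₂ - 2 * z₃ = 0) : ∃ u, z₁ = z₃ + u ∧ z₂ = z₃ - u :=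
  ⟨(z₁ - z₂) / 2, by linear_combination h / 2, by linear_combination h / 2⟩

theorem statement11_general (r : ℝ) (z₁ z₂ z₃ w₁ w₂ w₃ : ℂ)
    (hzC : Complex.I * (z₁ + z₂ - 2 * z₃) = 0)
    (hzR : (‖z₁‖ ^ 2 + ‖z₂‖ ^ 2 - 2 * ‖z₃‖ ^ 2) / 2 = r)
    (hwC : Complex.I * (w₁ + w₂ - 2 * w₃) = 0)
    (hwR : (‖w₁‖ ^ 2 + ‖w₂‖ ^ 2 - 2 * ‖w₃‖ ^ 2) / 2 = r) :
    ∃ (θ : ℝ) (c : ℂ),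
      w₁ = Complex.exp (θ * Complex.I) * z₁ + c ∧
      w₂ = Complex.exp (θ * Complex.I) * z₂ + c ∧
      w₃ = Complex.exp (θ * Complex.I) * z₃ + c := by
  obtain ⟨u, rfl, rfl⟩ :=
    exists_eq_add_eq_sub_of_add_sub_two_mul_eq_zero ((mul_eq_zero.mp hzC).resolve_left I_ne_zero)
  obtain ⟨v, rfl, rfl⟩ :=
    exists_eq_add_eq_sub_of_add_sub_two_mul_eq_zero ((mul_eq_zero.mp hwC).resolve_left I_ne_zero)
  have hu : ‖u‖ ^ 2 = r := by linarith [parallelogram_law_with_norm ℂ z₃ u]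
  have hv : ‖v‖ ^ 2 = r := by linarith [parallelogram_law_with_norm ℂ w₃ v]
  obtain ⟨θ, hθ⟩ := exists_exp_mul_I_mul_eq_of_norm_eq <|
    (pow_left_inj₀ (norm_nonneg u) (norm_nonneg v) two_ne_zero).mp (hu.trans hv.symm)
  refine ⟨θ, w₃ - exp (θ * I) * z₃, ?_, ?_, ?_⟩
  · linear_combination -hθ
  · linear_combination hθ
  · ring

theorem statement11 (r : ℝ) (hr : 0 < r) (z₁ z₂ z₃ w₁ w₂ w₃ : ℂ)
    (hzC : Complex.I * (z₁ + z₂ - 2 * z₃) = 0)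
    (hzR : (‖z₁‖ ^ 2 + ‖z₂‖ ^ 2 - 2 * ‖z₃‖ ^ 2) / 2 = r)
    (hwC : Complex.I * (w₁ + w₂ - 2 * w₃) = 0)
    (hwR : (‖w₁‖ ^ 2 + ‖w₂‖ ^ 2 - 2 * ‖w₃‖ ^ 2) / 2 = r) :
    ∃ (θ : ℝ) (c : ℂ),
      w₁ = Complex.exp (θ * Complex.I) * z₁ + c ∧
      w₂ = Complex.exp (θ * Complex.I) * z₂ + c ∧
      w₃ = Complex.exp (θ * Complex.I) * z₃ + c :=
  statement11_general r z₁ z₂ z₃ w₁ w₂ w₃ hzC hzR hwC hwR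
end

section
/- Let Γ : Fin N → ℝ and let z : ℝ → Fin N → ℂ be a solution of the N-vortex equations: for every t ∈ ℝ the points z(t)₁, …, z(t)_N are pairwise distinct, and for every k and t the function s ↦ z(s)ₖ has derivative at t equal to −(1/(2πi))·∑_{l ≠ k} Γₗ / ( conj(z(t)ₖ) − conj(z(t)ₗ) ). Then the function t ↦ ∑ₖ Γₖ·z(t)ₖ is constant; in particular Φ_ℂ is a conserved quantity of the vortex flow. -/
/-! The weighted velocities sum to zero: after multiplying by `Γₖ`, the interaction terms
`Γₖ Γₗ / (conj zₖ - conj zₗ)` are antisymmetric in `(k, l)`, so the off-diagonal double sum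
cancels in pairs. Hence `∑ₖ Γₖ zₖ` has derivative zero everywhere. -/

open Finset

theorem Finset.sum_sum_erase_eq_zero_of_antisymm {ι M : Type*} [DecidableEq ι] [AddCommMonoid M]
    (s : Finset ι) (f : ι → ι → M) (hf : ∀ i j, f i j + f j i = 0) :
    ∑ i ∈ s, ∑ j ∈ s.erase i, f i j = 0 := by
  rw [← sum_finset_product s.offDiag s (fun i => s.erase i) (by simp [and_comm, eq_comm])
    (f := fun p => f p.1 p.2)]
  exact sum_involution (fun p _ => p.swap) (fun p _ => hf p.1 p.2)
    (fun p hp _ => by simpa [Prod.ext_iff, eq_comm] using (mem_offDiag.1 hp).2.2)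
    (fun p hp => by grind) (fun p _ => p.swap_swap)

theorem sum_mul_sum_erase_div_sub_eq_zero {ι K : Type*} [Fintype ι] [DecidableEq ι] [Field K]
    (Γ w : ι → K) : ∑ k, Γ k * ∑ l ∈ univ.erase k, Γ l / (w k - w l) = 0 := by
  simp_rw [mul_sum]
  refine sum_sum_erase_eq_zero_of_antisymm _ _ fun k l => ?_
  rw [← neg_sub (w k), div_neg]
  ring

theorem statement12_general (N : ℕ) (Γ : Fin N → ℝ) (z : ℝ → Fin N → ℂ)
    (hode : ∀ (k : Fin N) (t : ℝ),
      HasDerivAt (fun s => z s k)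
        (-(1 / (2 * (Real.pi : ℂ) * Complex.I)) *
          ∑ l ∈ Finset.univ.erase k,
            (Γ l : ℂ) / ((starRingEnd ℂ) (z t k) - (starRingEnd ℂ) (z t l))) t) :
    ∀ t s : ℝ, ∑ k, (Γ k : ℂ) * z t k = ∑ k, (Γ k : ℂ) * z s k := by
  have hderiv (t : ℝ) : HasDerivAt (fun s => ∑ k, (Γ k : ℂ) * z s k) 0 t := by
    refine (HasDerivAt.fun_sum fun k (_ : k ∈ univ) =>
      (hode k t).const_mul (Γ k : ℂ)).congr_deriv ?_
    rw [eq_comm, ← mul_zero (-(1 / (2 * (Real.pi : ℂ) * Complex.I))),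
      ← sum_mul_sum_erase_div_sub_eq_zero (fun k => (Γ k : ℂ)) fun k => starRingEnd ℂ (z t k),
      mul_sum]
    exact sum_congr rfl fun k _ => mul_left_comm _ _ _
  exact is_const_of_deriv_eq_zero (fun t => (hderiv t).differentiableAt) fun t => (hderiv t).deriv

theorem statement12 (N : ℕ) (Γ : Fin N → ℝ) (z : ℝ → Fin N → ℂ)
    (hdist : ∀ (t : ℝ) (k l : Fin N), k ≠ l → z t k ≠ z t l)
    (hode : ∀ (k : Fin N) (t : ℝ),
      HasDerivAt (fun s => z s k)
        (-(1 / (2 * (Real.pi : ℂ) * Complex.I)) *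
          ∑ l ∈ Finset.univ.erase k,
            (Γ l : ℂ) / ((starRingEnd ℂ) (z t k) - (starRingEnd ℂ) (z t l))) t) :
    ∀ t s : ℝ, ∑ k, (Γ k : ℂ) * z t k = ∑ k, (Γ k : ℂ) * z s k :=
  statement12_general N Γ z hode
end

section
/- Let Γ : Fin N → ℝ and let z : ℝ → Fin N → ℂ be a solution of the N-vortex equations: for every t ∈ ℝ the points z(t)₁, …, z(t)_N are pairwise distinct, and for every k and t the function s ↦ z(s)ₖ has derivative at t equal to −(1/(2πi))·∑_{l ≠ k} Γₗ / ( conj(z(t)ₖ) − conj(z(t)ₗ) ). Then the function t ↦ ∑ₖ Γₖ·|z(t)ₖ|²/2 is constant; in particular Φ_ℝ is a conserved quantity of the vortex flow. -/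
/-!
Along the flow, `d/dt Φ_ℝ = ∑ₖ Γₖ ⟪zₖ, żₖ⟫_ℝ = Re (c · ∑_{k ≠ l} Γₖ Γₗ z̄ₖ / (z̄ₖ - z̄ₗ))` with
`c = -1/(2πi)` purely imaginary. Symmetrizing the double sum in `k ↔ l` turns each pair of terms
into `Γₖ Γₗ`, so the sum is real and the real part vanishes.
-/

open Finset Function ComplexConjugate
open scoped InnerProductSpace

theorem Finset.sum_sum_erase_comm {ι M : Type*} [Fintype ι] [DecidableEq ι] [AddCommMonoid M]
    (f : ι → ι → M) :
    ∑ k, ∑ l ∈ univ.erase k, f k l = ∑ k, ∑ l ∈ univ.erase k, f l k := by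
  rw [sum_comm' (t' := univ) (s' := fun l => univ.erase l)]
  simp [ne_comm]

theorem two_mul_sum_sum_erase_mul_div_sub {ι K : Type*} [Fintype ι] [DecidableEq ι] [Field K]
    {a : ι → K} (ha : Injective a) (Γ : ι → K) :
    2 * ∑ k, ∑ l ∈ univ.erase k, Γ k * Γ l * (a k / (a k - a l))
      = ∑ k, ∑ l ∈ univ.erase k, Γ k * Γ l := by
  rw [two_mul]
  nth_rw 2 [sum_sum_erase_comm]
  simp only [← sum_add_distrib]
  refine sum_congr rfl fun k _ => sum_congr rfl fun l hl => ?_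
  have hkl : a k - a l ≠ 0 := sub_ne_zero.mpr (ha.ne (ne_of_mem_erase hl).symm)
  have hlk : a l - a k ≠ 0 := sub_ne_zero.mpr (ha.ne (ne_of_mem_erase hl))
  field_simp
  ring

noncomputable def vortexVelocity {N : ℕ} (Γ : Fin N → ℝ) (w : Fin N → ℂ) (k : Fin N) : ℂ :=
  -(1 / (2 * (Real.pi : ℂ) * Complex.I)) *
    ∑ l ∈ univ.erase k, (Γ l : ℂ) / (conj (w k) - conj (w l))

theorem sum_mul_inner_vortexVelocity_eq_zero {N : ℕ} (Γ : Fin N → ℝ) {w : Fin N → ℂ}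
    (hw : Injective w) :
    ∑ k, Γ k * ⟪w k, vortexVelocity Γ w k⟫_ℝ = 0 := by
  set c : ℂ := -(1 / (2 * (Real.pi : ℂ) * Complex.I))
  have hc : c.re = 0 := by simp [c]
  have hS := two_mul_sum_sum_erase_mul_div_sub
    ((RingHom.injective _).comp hw : Injective (conj ∘ w)) (fun k => (Γ k : ℂ))
  have hre : ∑ k, Γ k * ⟪w k, vortexVelocity Γ w k⟫_ℝ
      = (c * ∑ k, ∑ l ∈ univ.erase k,
          (Γ k : ℂ) * Γ l * (conj (w k) / (conj (w k) - conj (w l)))).re := by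
    simp only [Complex.inner, vortexVelocity, ← Complex.re_ofReal_mul, ← Complex.re_sum,
      mul_sum, sum_mul]
    congr 1
    refine sum_congr rfl fun k _ => sum_congr rfl fun l _ => ?_
    ring
  have hreal : ∑ k, ∑ l ∈ univ.erase k, (Γ k : ℂ) * Γ l * (conj (w k) / (conj (w k) - conj (w l)))
      = ((∑ k, ∑ l ∈ univ.erase k, Γ k * Γ l / 2 : ℝ) : ℂ) := by
    push_cast
    simp only [← sum_div]
    exact eq_div_of_mul_eq two_ne_zero ((mul_comm _ _).trans hS)
  rw [hre, hreal, Complex.re_mul_ofReal, hc, zero_mul]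

theorem statement13 (N : ℕ) (Γ : Fin N → ℝ) (z : ℝ → Fin N → ℂ)
    (hdist : ∀ (t : ℝ) (k l : Fin N), k ≠ l → z t k ≠ z t l)
    (hode : ∀ (k : Fin N) (t : ℝ),
      HasDerivAt (fun s => z s k)
        (-(1 / (2 * (Real.pi : ℂ) * Complex.I)) *
          ∑ l ∈ Finset.univ.erase k,
            (Γ l : ℂ) / ((starRingEnd ℂ) (z t k) - (starRingEnd ℂ) (z t l))) t) :
    ∀ t s : ℝ, ∑ k, Γ k * ‖z t k‖ ^ 2 / 2
      = ∑ k, Γ k * ‖z s k‖ ^ 2 / 2 := by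
  have hΦ : ∀ t, HasDerivAt (fun s => ∑ k, Γ k * ‖z s k‖ ^ 2 / 2) 0 t := by
    intro t
    have hinj : Injective (z t) := fun k l h => by_contra fun hkl => hdist t k l hkl h
    have hsum : HasDerivAt (fun s => ∑ k, Γ k * ‖z s k‖ ^ 2 / 2)
        (∑ k, Γ k * (2 * ⟪z t k, vortexVelocity Γ (z t) k⟫_ℝ) / 2) t :=
      HasDerivAt.fun_sum fun k _ => (((hode k t).norm_sq).const_mul (Γ k)).div_const 2
    have hzero : ∑ k, Γ k * (2 * ⟪z t k, vortexVelocity Γ (z t) k⟫_ℝ) / 2 = 0 := by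
      rw [← sum_mul_inner_vortexVelocity_eq_zero Γ hinj]
      exact sum_congr rfl fun k _ => by ring
    rwa [hzero] at hsum
  exact fun t s => is_const_of_deriv_eq_zero (fun x => (hΦ x).differentiableAt)
    (fun x => (hΦ x).deriv) t s
end

section
/- Let n, d ∈ ℕ and let α : Fin n → ℤ^d be integer weight vectors. The torus T = ℝ^d acts on ℂ^n by θ·z = (exp(i·⟨αₖ, θ⟩)·zₖ)ₖ, where ⟨αₖ, θ⟩ = ∑ⱼ αₖⱼ·θⱼ, and the associated momentum map is Φ : ℂ^n → ℝ^d, Φ(z) = (1/2)·∑ₖ |zₖ|²·αₖ. Then Φ is open relative to its image: for every open set U ⊆ ℂ^n invariant under this action, Φ(U) is open in Φ(ℂ^n) = { ∑ₖ tₖ·αₖ : tₖ ≥ 0 } with the subspace topology induced from ℝ^d. -/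
/-!
The momentum map factors as `Φ = A ∘ μ`, where `μ z = (‖z k‖² / 2)ₖ` is the momentum map of the
standard action of `(S¹)ⁿ` on `ℂⁿ` and `A t = ∑ₖ t k • αₖ` is linear. Polar coordinates give a
continuous section of `μ` through every point, so `μ` is open onto the orthant `0 ≤ t`. The map `A`
is open from the orthant onto the cone it spans: near `t₀` the orthant is `t₀` plus the cone `K` of
vectors that are nonnegative where `t₀` vanishes, and every point of `A K` has a preimage in `K`
whose norm is bounded by a constant times its own (a Hoffman-type bound, obtained from
Carathéodory's theorem for cones and the bounded inverse of an injective linear map).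
-/

open Filter Function Set Topology

theorem exists_isOpen_inter_eq_of_forall_mem_nhdsWithin {Y : Type*} [TopologicalSpace Y]
    {S R : Set Y} (hSR : S ⊆ R) (h : ∀ y ∈ S, S ∈ 𝓝[R] y) : ∃ V, IsOpen V ∧ S = V ∩ R := by
  choose V hVo hyV hVS using fun y hy => mem_nhdsWithin.1 (h y hy)
  refine ⟨⋃ y, ⋃ hy, V y hy, isOpen_iUnion fun y => isOpen_iUnion (hVo y), ?_⟩
  ext y
  constructor
  · exact fun hy => ⟨mem_iUnion₂.2 ⟨y, hy, hyV y hy⟩, hSR hy⟩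
  · rintro ⟨hy, hyR⟩
    obtain ⟨x, hx, hyx⟩ := mem_iUnion₂.1 hy
    exact hVS x hx ⟨hyx, hyR⟩

theorem nhdsWithin_range_le_map_of_rightInvOn {X Y : Type*} [TopologicalSpace X]
    [TopologicalSpace Y] {f : X → Y} {g : Y → X} {x : X} (hg : ContinuousAt g (f x))
    (hgx : g (f x) = x) (hfg : RightInvOn g f (range f)) : 𝓝[range f] (f x) ≤ map f (𝓝 x) := by
  intro S hS
  rw [mem_nhdsWithin_iff_exists_mem_nhds_inter]
  refine ⟨g ⁻¹' (f ⁻¹' S), hg.preimage_mem_nhds (by rwa [hgx]), fun y ⟨hy, hyf⟩ => ?_⟩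
  rw [← hfg hyf]
  exact hy

section Caratheodory

variable {𝕜 : Type*} [Field 𝕜] [LinearOrder 𝕜] [IsStrictOrderedRing 𝕜]
  {ι : Type*} [Fintype ι] {F : Type*} [AddCommGroup F] [Module 𝕜 F]

theorem exists_nonneg_repr_support_ssubset (v : ι → F) {a c : ι → 𝕜} (ha : 0 ≤ a)
    (hca : support c ⊆ support a) (hc : Fintype.linearCombination 𝕜 v c = 0)
    (hpos : ∃ i, 0 < c i) :
    ∃ b, 0 ≤ b ∧ Fintype.linearCombination 𝕜 v b = Fintype.linearCombination 𝕜 v a ∧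
      support b ⊂ support a := by
  classical
  obtain ⟨i, hi⟩ := hpos
  obtain ⟨i₀, hi₀, hmin⟩ := Finset.exists_min_image (Finset.univ.filter (0 < c ·))
    (fun i => a i / c i) ⟨i, by simpa using hi⟩
  rw [Finset.mem_filter] at hi₀
  set τ := a i₀ / c i₀
  have hτ : 0 ≤ τ := div_nonneg (ha i₀) hi₀.2.le
  refine ⟨a - τ • c, fun i => ?_, by simp [hc], ?_⟩
  · rcases lt_or_ge 0 (c i) with hci | hci
    · have := hmin i (by simpa using hci)
      rw [le_div_iff₀ hci] at this
      simpa using this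
    · have hai : 0 ≤ a i := ha i
      have := mul_nonpos_of_nonneg_of_nonpos hτ hci
      simp only [Pi.sub_apply, Pi.smul_apply, smul_eq_mul, Pi.zero_apply]
      linarith
  · have hsub : support (a - τ • c) ⊆ support a := fun i hi hai => by
      have hci : c i = 0 := notMem_support.1 fun h => hca h hai
      simp [hai, hci] at hi
    refine (ssubset_iff_of_subset hsub).2 ⟨i₀, hca (ne_of_gt hi₀.2), ?_⟩
    simp [τ, div_mul_cancel₀ _ hi₀.2.ne']

/-- Carathéodory's theorem for finitely generated cones. -/
theorem exists_nonneg_repr_linearIndepOn (v : ι → F) {a : ι → 𝕜} (ha : 0 ≤ a) :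
    ∃ b, 0 ≤ b ∧ Fintype.linearCombination 𝕜 v b = Fintype.linearCombination 𝕜 v a ∧
      LinearIndepOn 𝕜 v (support b) := by
  classical
  obtain ⟨b, ⟨hb₀, hb⟩, hmin⟩ := (measure fun b : ι → 𝕜 => (support b).ncard).wf.has_min
    {b | 0 ≤ b ∧ Fintype.linearCombination 𝕜 v b = Fintype.linearCombination 𝕜 v a} ⟨a, ha, rfl⟩
  refine ⟨b, hb₀, hb, ?_⟩
  by_contra hdep
  rw [← coe_toFinset (support b), not_linearIndepOn_finset_iff] at hdep
  obtain ⟨f, hf, i, hi, hfi⟩ := hdep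
  rw [mem_toFinset] at hi
  set g := (support b).indicator f
  have hg : Fintype.linearCombination 𝕜 v g = 0 := by
    rw [Fintype.linearCombination_apply, ← hf,
      ← Finset.sum_indicator_subset (fun i => f i • v i) (Finset.subset_univ _)]
    simp only [coe_toFinset, indicator_smul_apply_left, g]
  obtain ⟨c, hcb, hc, hpos⟩ : ∃ c : ι → 𝕜, support c ⊆ support b ∧
      Fintype.linearCombination 𝕜 v c = 0 ∧ ∃ i, 0 < c i := by
    have hgb : support g ⊆ support b := support_indicator_subset
    rcases hfi.lt_or_gt with h | h
    · exact ⟨-g, by simpa using hgb, by simp [hg], i, by simp [g, indicator_of_mem hi, h]⟩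
    · exact ⟨g, hgb, hg, i, by simp [g, indicator_of_mem hi, h]⟩
  obtain ⟨b', hb'₀, hb', hlt⟩ := exists_nonneg_repr_support_ssubset v hb₀ hcb hc hpos
  exact hmin b' ⟨hb'₀, hb'.trans hb⟩ (ncard_lt_ncard hlt)

end Caratheodory

section Hoffman

variable {ι : Type*} [Fintype ι] {F : Type*} [NormedAddCommGroup F] [NormedSpace ℝ F]

theorem LinearIndepOn.exists_norm_le_mul {v : ι → F} {s : Set ι} (hv : LinearIndepOn ℝ v s) :
    ∃ C, ∀ a : ι → ℝ, support a ⊆ s → ‖a‖ ≤ C * ‖Fintype.linearCombination ℝ v a‖ := by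
  classical
  obtain ⟨K, -, hK⟩ :=
    (Fintype.linearCombination ℝ (fun i : s => v i)).injective_iff_antilipschitz.1
      (linearIndependent_iff_injective_fintypeLinearCombination.1 hv)
  refine ⟨K, fun a ha => ?_⟩
  have hsum : Fintype.linearCombination ℝ (fun i : s => v i) (fun i => a i) =
      Fintype.linearCombination ℝ v a := by
    simp only [Fintype.linearCombination_apply]
    rw [Finset.sum_set_coe (f := fun i => a i • v i)]
    exact Finset.sum_subset (Finset.subset_univ _) fun i _ hi => by
      simp [notMem_support.1 fun h => hi (mem_toFinset.2 (ha h))]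
  have hnorm : ‖a‖ ≤ ‖fun i : s => a i‖ := by
    refine (pi_norm_le_iff_of_nonneg (norm_nonneg _)).2 fun i => ?_
    by_cases hi : i ∈ s
    · exact norm_le_pi_norm (fun i : s => a i) ⟨i, hi⟩
    · simp [notMem_support.1 fun h => hi (ha h)]
  calc ‖a‖ ≤ ‖fun i : s => a i‖ := hnorm
    _ ≤ K * ‖Fintype.linearCombination ℝ v a‖ := hsum ▸ hK.le_mul_norm (map_zero _) _

theorem exists_nonneg_repr_norm_le_mul (v : ι → F) :
    ∃ C, ∀ a : ι → ℝ, 0 ≤ a → ∃ b, 0 ≤ b ∧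
      Fintype.linearCombination ℝ v b = Fintype.linearCombination ℝ v a ∧
      ‖b‖ ≤ C * ‖Fintype.linearCombination ℝ v a‖ := by
  have hC : ∀ s : Set ι, ∃ C, LinearIndepOn ℝ v s → ∀ b : ι → ℝ, support b ⊆ s →
      ‖b‖ ≤ C * ‖Fintype.linearCombination ℝ v b‖ := fun s => by
    by_cases hs : LinearIndepOn ℝ v s
    · exact hs.exists_norm_le_mul.imp fun _ hC _ => hC
    · exact ⟨0, fun h => absurd h hs⟩
  choose C hC using hC
  obtain ⟨M, hM⟩ := Finite.exists_le C
  refine ⟨M, fun a ha => ?_⟩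
  obtain ⟨b, hb₀, hb, hind⟩ := exists_nonneg_repr_linearIndepOn v ha
  refine ⟨b, hb₀, hb, ?_⟩
  calc ‖b‖ ≤ C (support b) * ‖Fintype.linearCombination ℝ v b‖ := hC _ hind b subset_rfl
    _ ≤ M * ‖Fintype.linearCombination ℝ v a‖ := by rw [hb]; gcongr; exact hM _

theorem exists_repr_nonnegOn_norm_le_mul (v : ι → F) (Z : Set ι) :
    ∃ C, ∀ a : ι → ℝ, (∀ i ∈ Z, 0 ≤ a i) → ∃ b : ι → ℝ, (∀ i ∈ Z, 0 ≤ b i) ∧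
      Fintype.linearCombination ℝ v b = Fintype.linearCombination ℝ v a ∧
      ‖b‖ ≤ C * ‖Fintype.linearCombination ℝ v a‖ := by
  classical
  -- the coordinates outside `Z` are split into positive and negative parts
  set w : ι ⊕ ι → F := Sum.elim v (Zᶜ.indicator (-v))
  obtain ⟨C, hC⟩ := exists_nonneg_repr_norm_le_mul w
  refine ⟨2 * C, fun a ha => ?_⟩
  have hsplit : Fintype.linearCombination ℝ w (Sum.elim (fun i => (a i)⁺) fun i => (a i)⁻) =
      Fintype.linearCombination ℝ v a := by
    simp only [Fintype.linearCombination_apply, Fintype.sum_sum_type, ← Finset.sum_add_distrib]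
    refine Finset.sum_congr rfl fun i _ => ?_
    by_cases hi : i ∈ Z
    · simp [w, hi, negPart_eq_zero.2 (ha i hi), posPart_eq_self.2 (ha i hi)]
    · simp only [w, Sum.elim_inl, Sum.elim_inr, indicator_of_mem (show i ∈ Zᶜ from hi),
        Pi.neg_apply, smul_neg, ← sub_eq_add_neg, ← sub_smul, posPart_sub_negPart]
  obtain ⟨c, hc₀, hc, hcn⟩ := hC (Sum.elim (fun i => (a i)⁺) fun i => (a i)⁻)
    (by rintro (i | i) <;> simp [posPart_nonneg, negPart_nonneg])
  rw [hsplit] at hc hcn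
  refine ⟨fun i => c (Sum.inl i) - Zᶜ.indicator (fun i => c (Sum.inr i)) i, fun i hi => ?_, ?_, ?_⟩
  · simpa [indicator_of_notMem (show i ∉ Zᶜ from not_not.2 hi)] using hc₀ (Sum.inl i)
  · rw [← hc]
    simp only [Fintype.linearCombination_apply, Fintype.sum_sum_type, ← Finset.sum_add_distrib]
    refine Finset.sum_congr rfl fun i _ => ?_
    by_cases hi : i ∈ Z
    · simp [w, hi]
    · simp [w, hi, add_smul, sub_eq_add_neg]
  · refine ((pi_norm_le_iff_of_nonneg (by positivity : 0 ≤ 2 * ‖c‖)).2 fun i => ?_).trans ?_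
    · calc _ ≤ ‖c (Sum.inl i)‖ + ‖Zᶜ.indicator (fun i => c (Sum.inr i)) i‖ := norm_sub_le _ _
        _ ≤ ‖c‖ + ‖c‖ := add_le_add (norm_le_pi_norm c _)
            ((norm_indicator_le_norm_self _ _).trans (norm_le_pi_norm c _))
        _ = 2 * ‖c‖ := by ring
    · calc 2 * ‖c‖ ≤ 2 * (C * ‖Fintype.linearCombination ℝ v a‖) := by gcongr
        _ = _ := by ring

theorem nhdsWithin_image_Ici_le_map_linearCombination (v : ι → F) {t₀ : ι → ℝ} (ht₀ : 0 ≤ t₀) :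
    𝓝[Fintype.linearCombination ℝ v '' Ici 0] (Fintype.linearCombination ℝ v t₀) ≤
      map (Fintype.linearCombination ℝ v) (𝓝[Ici 0] t₀) := by
  obtain ⟨C, hC⟩ := exists_repr_nonnegOn_norm_le_mul v {i | t₀ i = 0}
  set A := Fintype.linearCombination ℝ v
  have hpos : ∀ᶠ t in 𝓝 t₀, ∀ i, t₀ i ≠ 0 → 0 < t i := eventually_all.2 fun i => by
    by_cases hi : t₀ i = 0
    · simp [hi]
    · exact ((continuous_apply i).continuousAt.eventually
        (lt_mem_nhds ((ht₀ i).lt_of_ne' hi))).mono fun t ht _ => ht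
  obtain ⟨δ, hδ, hδpos⟩ := Metric.eventually_nhds_iff.1 hpos
  rw [(Metric.nhdsWithin_basis_ball.map _).ge_iff]
  intro ε hε
  set r := min ε δ
  rw [Metric.mem_nhdsWithin_iff]
  refine ⟨r / (|C| + 1), by positivity, ?_⟩
  rintro _ ⟨hy, s, hs, rfl⟩
  -- `s - t₀` is nonnegative where `t₀` vanishes; trade it for a short `u` with the same image
  obtain ⟨u, hu₀, hu, hun⟩ := hC (s - t₀) fun i hi => by simpa [show t₀ i = 0 from hi] using hs i
  rw [map_sub] at hu hun
  have hur : ‖u‖ < r := by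
    have hy' : ‖A s - A t₀‖ < r / (|C| + 1) := by rwa [← dist_eq_norm]
    calc ‖u‖ ≤ |C| * ‖A s - A t₀‖ := hun.trans (by gcongr; exact le_abs_self C)
      _ < r := by
        rw [lt_div_iff₀ (by positivity)] at hy'
        nlinarith [norm_nonneg (A s - A t₀)]
  have hdist : dist (t₀ + u) t₀ < r := by rwa [dist_eq_norm, add_sub_cancel_left]
  refine ⟨t₀ + u, ⟨?_, fun i => ?_⟩, by rw [map_add, hu, add_sub_cancel]⟩
  · exact hdist.trans_le (min_le_left _ _)
  · by_cases hi : t₀ i = 0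
    · simpa [hi] using hu₀ i hi
    · exact (hδpos (hdist.trans_le (min_le_right _ _)) i hi).le

end Hoffman

section MomentMap

open Complex

variable {ι : Type*}

noncomputable def stdMomentMap (z : ι → ℂ) : ι → ℝ := fun i => ‖z i‖ ^ 2 / 2

theorem stdMomentMap_nonneg (z : ι → ℂ) : 0 ≤ stdMomentMap z := fun i => by
  simp only [stdMomentMap, Pi.zero_apply]
  positivity

theorem stdMomentMap_polar {t : ι → ℝ} (ht : 0 ≤ t) (θ : ι → ℝ) :
    stdMomentMap (fun i => (√(2 * t i) : ℂ) * exp (θ i * I)) = t := by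
  funext i
  have hti : 0 ≤ t i := ht i
  simp only [stdMomentMap, norm_mul, norm_exp_ofReal_mul_I, mul_one, norm_real,
    Real.norm_of_nonneg (Real.sqrt_nonneg _), Real.sq_sqrt (by positivity : (0 : ℝ) ≤ 2 * t i)]
  ring

theorem range_stdMomentMap : range (stdMomentMap (ι := ι)) = Ici 0 :=
  (range_subset_iff.2 stdMomentMap_nonneg).antisymm fun _ ht =>
    ⟨_, stdMomentMap_polar ht fun _ => 0⟩

theorem nhdsWithin_range_stdMomentMap_le_map [Fintype ι] (z : ι → ℂ) :
    𝓝[range stdMomentMap] (stdMomentMap z) ≤ map stdMomentMap (𝓝 z) := by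
  refine nhdsWithin_range_le_map_of_rightInvOn
    (g := fun (t : ι → ℝ) i => (√(2 * t i) : ℂ) * exp (arg (z i) * I))
    (continuous_pi fun i => (continuous_ofReal.comp (Real.continuous_sqrt.comp
      (continuous_const.mul (continuous_apply i)))).mul continuous_const).continuousAt ?_ ?_
  · funext i
    have : √(2 * stdMomentMap z i) = ‖z i‖ := by
      rw [stdMomentMap, mul_div_cancel₀ _ two_ne_zero, Real.sqrt_sq (norm_nonneg _)]
    simp only [this, norm_mul_exp_arg_mul_I]
  · rintro _ ⟨w, rfl⟩
    exact stdMomentMap_polar (stdMomentMap_nonneg w) _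

theorem nhdsWithin_range_linearCombination_comp_stdMomentMap_le_map [Fintype ι] {F : Type*}
    [NormedAddCommGroup F] [NormedSpace ℝ F] (v : ι → F) (z : ι → ℂ) :
    𝓝[range (Fintype.linearCombination ℝ v ∘ stdMomentMap)]
        ((Fintype.linearCombination ℝ v ∘ stdMomentMap) z) ≤
      map (Fintype.linearCombination ℝ v ∘ stdMomentMap) (𝓝 z) := by
  rw [range_comp, range_stdMomentMap, ← map_map]
  calc _ ≤ map (Fintype.linearCombination ℝ v) (𝓝[Ici 0] (stdMomentMap z)) :=
        nhdsWithin_image_Ici_le_map_linearCombination v (stdMomentMap_nonneg z)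
    _ ≤ _ := map_mono (range_stdMomentMap (ι := ι) ▸ nhdsWithin_range_stdMomentMap_le_map z)

end MomentMap

theorem statement17 (n d : ℕ) (α : Fin n → Fin d → ℤ) :
    Set.range (fun z : Fin n → ℂ => fun j : Fin d =>
        (1 / 2 : ℝ) * ∑ k, ‖z k‖ ^ 2 * (α k j : ℝ))
      = {y : Fin d → ℝ | ∃ t : Fin n → ℝ, (∀ k, 0 ≤ t k) ∧
          y = fun j : Fin d => ∑ k, t k * (α k j : ℝ)} ∧
    ∀ U : Set (Fin n → ℂ), IsOpen U →
      (∀ (θ : Fin d → ℝ) (z : Fin n → ℂ), z ∈ U →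
        (fun k => Complex.exp (Complex.I * ∑ j, (α k j : ℂ) * (θ j : ℂ)) * z k) ∈ U) →
      ∃ V : Set (Fin d → ℝ), IsOpen V ∧
        (fun z : Fin n → ℂ => fun j : Fin d =>
            (1 / 2 : ℝ) * ∑ k, ‖z k‖ ^ 2 * (α k j : ℝ)) '' U
          = V ∩ Set.range (fun z : Fin n → ℂ => fun j : Fin d =>
              (1 / 2 : ℝ) * ∑ k, ‖z k‖ ^ 2 * (α k j : ℝ)) := by
  set v : Fin n → Fin d → ℝ := fun k j => α k j
  have hA : ∀ t, Fintype.linearCombination ℝ v t = fun j => ∑ k, t k * (α k j : ℝ) := fun t => by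
    funext j
    simp [Fintype.linearCombination_apply, Finset.sum_apply, v]
  have hΦ : (fun z : Fin n → ℂ => fun j : Fin d => (1 / 2 : ℝ) * ∑ k, ‖z k‖ ^ 2 * (α k j : ℝ)) =
      Fintype.linearCombination ℝ v ∘ stdMomentMap := by
    funext z j
    simp only [comp_apply, hA, stdMomentMap, Finset.mul_sum]
    exact Finset.sum_congr rfl fun k _ => by ring
  have hcone : {y : Fin d → ℝ | ∃ t : Fin n → ℝ, (∀ k, 0 ≤ t k) ∧
      y = fun j : Fin d => ∑ k, t k * (α k j : ℝ)} = Fintype.linearCombination ℝ v '' Ici 0 := by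
    ext y
    simp only [hA, mem_ofPred_eq, mem_image, mem_Ici, Pi.le_def, Pi.zero_apply, eq_comm]
  rw [hΦ, hcone]
  refine ⟨by rw [range_comp, range_stdMomentMap], fun U hU _ =>
    exists_isOpen_inter_eq_of_forall_mem_nhdsWithin (image_subset_range _ _) ?_⟩
  rintro _ ⟨z, hz, rfl⟩
  exact nhdsWithin_range_linearCombination_comp_stdMomentMap_le_map v z
    (image_mem_map (hU.mem_nhds hz))
end

section
/- Let σ ∈ ℝ with σ ≠ 0, and let A(w,θ)(μ, m) = ( e^{iθ}·μ + i·σ·w, m + Im(conj(w)·e^{iθ}·μ) + σ·|w|²/2 ) be the modified coadjoint action of SE(2) on ℂ × ℝ. Then for every (μ, m) ∈ ℂ × ℝ and every θ ∈ ℝ there is exactly one w ∈ ℂ with A(w,θ)(μ, m) = (μ, m), namely w = −i·(1 − e^{iθ})·μ/σ. Hence the isotropy subgroup of every point (μ, m) projects bijectively onto the rotation subgroup and is isomorphic to SO(2); in particular it is compact. -/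
/-!
The translational component of the fixed-point equation is linear in `w` and forces
`w = -i (1 - e^{iθ}) μ / σ`. The `m`-component then holds automatically, because
`2σ (Im(w̄ u) + σ|w|²/2) = |u + iσw|² - |u|²`, which vanishes at `u = e^{iθ} μ` once
`u + iσw = μ`, rotations preserving `|μ|`.
-/

open Complex

theorem norm_add_I_mul_sq_sub_norm_sq (σ : ℝ) (u w : ℂ) :
    ‖u + I * σ * w‖ ^ 2 - ‖u‖ ^ 2 = 2 * σ * ((starRingEnd ℂ w * u).im + σ * ‖w‖ ^ 2 / 2) := by
  simp only [Complex.sq_norm, normSq_apply, add_re, add_im, mul_re, mul_im, I_re, I_im,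
    ofReal_re, ofReal_im, conj_re, conj_im]
  ring

theorem im_conj_mul_add_eq_zero_of_add_I_mul_eq {σ : ℝ} (hσ : σ ≠ 0) {u w μ : ℂ}
    (hu : ‖u‖ = ‖μ‖) (h : u + I * σ * w = μ) :
    (starRingEnd ℂ w * u).im + σ * ‖w‖ ^ 2 / 2 = 0 := by
  have key := norm_add_I_mul_sq_sub_norm_sq σ u w
  rw [h, hu, sub_self, eq_comm] at key
  exact (mul_eq_zero.mp key).resolve_left (mul_ne_zero two_ne_zero hσ)

theorem mul_add_I_mul_eq_iff {σ : ℝ} (hσ : σ ≠ 0) (e μ w : ℂ) :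
    e * μ + I * σ * w = μ ↔ w = -I * (1 - e) * μ / σ := by
  rw [eq_div_iff (ofReal_ne_zero.mpr hσ)]
  constructor <;> intro h
  · linear_combination (-I) * h + σ * w * I_sq
  · linear_combination I * h - (1 - e) * μ * I_sq

theorem statement19 (σ : ℝ) (hσ : σ ≠ 0) (A : ℂ → ℝ → ℂ × ℝ → ℂ × ℝ)
    (hA : ∀ (w : ℂ) (θ : ℝ) (p : ℂ × ℝ),
      A w θ p = (Complex.exp (θ * Complex.I) * p.1 + Complex.I * (σ : ℂ) * w,
        p.2 + ((starRingEnd ℂ) w * (Complex.exp (θ * Complex.I) * p.1)).im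
          + σ * ‖w‖ ^ 2 / 2)) :
    ∀ (μ : ℂ) (m : ℝ) (θ : ℝ) (w : ℂ),
      A w θ (μ, m) = (μ, m) ↔
        w = -Complex.I * (1 - Complex.exp (θ * Complex.I)) * μ / (σ : ℂ) := by
  intro μ m θ w
  have rotation_isometry : ‖exp (θ * I) * μ‖ = ‖μ‖ := by
    rw [norm_mul, norm_exp_ofReal_mul_I, one_mul]
  rw [hA, Prod.mk.injEq, add_assoc, add_eq_left, ← mul_add_I_mul_eq_iff hσ]
  exact and_iff_left_of_imp (im_conj_mul_add_eq_zero_of_add_I_mul_eq hσ rotation_isometry)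
end
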